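/- Let D be a nonnegative-definite symmetric d×d real matrix and x a standard Gaussian vector in ℝ^d. Then for every p ≥ 1 there is a constant C_p > 0 (depending only on p) such that E[|xᵀ D x|^p] ≤ C_p ((Tr D)^p + (2p−1)!! · Tr(D^p)). -/

import Mathlib

/-!
Diagonalise `D` in an orthonormal eigenbasis `bᵢ` with eigenvalues `λᵢ ≥ 0`, so that
`xᵀDx = ∑ λᵢ ⟪bᵢ, x⟫²`. Each `⟪bᵢ, x⟫` is a standard Gaussian, because the standard Gaussian
measure on a Euclidean space has variance `‖v‖²` in every direction `v`. Jensen's inequality for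
the weights `λᵢ` gives `(xᵀDx)^p ≤ (Tr D)^(p-1) ∑ λᵢ ⟪bᵢ, x⟫^(2p)`, and taking expectations,
`E[(xᵀDx)^p] ≤ (Tr D)^p E[g^(2p)]` for a standard Gaussian `g`; this implies the claim since
`Tr(D^p) ≥ 0`.
-/

open MeasureTheory ProbabilityTheory Matrix
open scoped RealInnerProductSpace NNReal

theorem inner_pow_succ_le_weight_pow_mul_Lp {ι : Type*} (s : Finset ι) (w z : ι → ℝ)
    (hw : ∀ i ∈ s, 0 ≤ w i) (hz : ∀ i ∈ s, 0 ≤ z i) (n : ℕ) :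
    (∑ i ∈ s, w i * z i) ^ (n + 1) ≤ (∑ i ∈ s, w i) ^ n * ∑ i ∈ s, w i * z i ^ (n + 1) := by
  rcases (Finset.sum_nonneg hw).eq_or_lt with hW | hW
  · have hw0 : ∀ i ∈ s, w i = 0 := (Finset.sum_eq_zero_iff_of_nonneg hw).mp hW.symm
    have hwz : ∀ f : ι → ℝ, ∑ i ∈ s, w i * f i = 0 := fun f =>
      Finset.sum_eq_zero fun i hi => by rw [hw0 i hi, zero_mul]
    simp [hwz]
  · have h := Real.pow_arith_mean_le_arith_mean_pow s (fun i => w i / ∑ j ∈ s, w j) z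
      (fun i hi => div_nonneg (hw i hi) hW.le) (by rw [← Finset.sum_div, div_self hW.ne']) hz
      (n + 1)
    simp only [div_mul_eq_mul_div, ← Finset.sum_div, div_pow] at h
    rw [div_le_div_iff₀ (by positivity) hW] at h
    exact le_of_mul_le_mul_right ((le_of_eq (by ring)).trans (h.trans_eq (by ring))) hW

section stdGaussian

variable {E : Type*} [NormedAddCommGroup E] [InnerProductSpace ℝ E] [FiniteDimensional ℝ E]

theorem LinearMap.IsSymmetric.inner_apply_self_eq_sum_eigenvalues {T : E →ₗ[ℝ] E} {n : ℕ}
    (hT : T.IsSymmetric) (hn : Module.finrank ℝ E = n) (y : E) :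
    ⟪T y, y⟫ = ∑ i, hT.eigenvalues hn i * ⟪hT.eigenvectorBasis hn i, y⟫ ^ 2 := by
  rw [← (hT.eigenvectorBasis hn).repr.inner_map_map, PiLp.inner_apply]
  refine Finset.sum_congr rfl fun i _ => ?_
  simp only [OrthonormalBasis.repr_apply_apply]
  rw [← hT, hT.apply_eigenvectorBasis]
  simp only [Real.ringHom_apply, real_inner_smul_left, RCLike.inner_apply]
  ring

variable [MeasurableSpace E] [BorelSpace E]

lemma stdGaussian_map_inner (v : E) :
    (stdGaussian E).map (fun y => ⟪v, y⟫) = gaussianReal 0 (‖v‖₊ ^ 2) := by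
  have h := IsGaussian.map_eq_gaussianReal (μ := stdGaussian E) (innerSL ℝ v)
  rw [integral_strongDual_stdGaussian, variance_dual_stdGaussian, innerSL_apply_norm] at h
  convert h using 2 <;> ext <;> simp

lemma integrable_inner_pow_stdGaussian (v : E) (k : ℕ) :
    Integrable (fun y => ⟪v, y⟫ ^ k) (stdGaussian E) := by
  have h : Integrable (fun t : ℝ => t ^ k) (gaussianReal 0 (‖v‖₊ ^ 2)) := by
    refine (integrable_norm_iff (by fun_prop)).mp ?_
    simpa only [norm_pow, id] using (memLp_id_gaussianReal (k : ℝ≥0)).integrable_norm_pow'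
  rwa [← stdGaussian_map_inner, integrable_map_measure (by fun_prop) (by fun_prop)] at h

lemma integral_inner_pow_stdGaussian (v : E) (k : ℕ) :
    ∫ y, ⟪v, y⟫ ^ k ∂stdGaussian E = ∫ t, t ^ k ∂gaussianReal 0 (‖v‖₊ ^ 2) := by
  rw [← stdGaussian_map_inner, integral_map (by fun_prop) (by fun_prop)]

theorem integral_inner_apply_self_pow_stdGaussian_le {T : E →ₗ[ℝ] E} (hT : T.IsPositive)
    (n : ℕ) :
    ∫ y, ⟪T y, y⟫ ^ n ∂stdGaussian E ≤
      LinearMap.trace ℝ E T ^ n * ∫ t, t ^ (2 * n) ∂gaussianReal 0 1 := by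
  obtain _ | k := n
  · simp
  set b := hT.isSymmetric.eigenvectorBasis rfl
  set ev := hT.isSymmetric.eigenvalues rfl
  have hev : ∀ i, 0 ≤ ev i := hT.nonneg_eigenvalues rfl
  have htr : LinearMap.trace ℝ E T = ∑ i, ev i := hT.isSymmetric.trace_eq_sum_eigenvalues rfl
  have hmoment : ∀ i, ∫ y, ⟪b i, y⟫ ^ (2 * (k + 1)) ∂stdGaussian E =
      ∫ t, t ^ (2 * (k + 1)) ∂gaussianReal 0 1 := fun i => by
    rw [integral_inner_pow_stdGaussian, b.nnnorm_eq_one, one_pow]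
  have hint : ∀ i, Integrable (fun y => ev i * ⟪b i, y⟫ ^ (2 * (k + 1))) (stdGaussian E) :=
    fun i => (integrable_inner_pow_stdGaussian _ _).const_mul _
  calc ∫ y, ⟪T y, y⟫ ^ (k + 1) ∂stdGaussian E
      ≤ ∫ y, (∑ i, ev i) ^ k * ∑ i, ev i * ⟪b i, y⟫ ^ (2 * (k + 1)) ∂stdGaussian E := by
        refine integral_mono_of_nonneg (ae_of_all _ fun y => pow_nonneg (hT.inner_nonneg_left y) _)
          ((integrable_finsetSum _ fun i _ => hint i).const_mul _) (ae_of_all _ fun y => ?_)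
        simpa only [hT.isSymmetric.inner_apply_self_eq_sum_eigenvalues rfl, pow_mul] using
          inner_pow_succ_le_weight_pow_mul_Lp _ ev (fun i => ⟪b i, y⟫ ^ 2) (fun i _ => hev i)
            (fun i _ => sq_nonneg _) k
    _ = LinearMap.trace ℝ E T ^ (k + 1) * ∫ t, t ^ (2 * (k + 1)) ∂gaussianReal 0 1 := by
        rw [integral_const_mul, integral_finsetSum _ fun i _ => hint i]
        simp only [integral_const_mul, hmoment, ← Finset.sum_mul, htr]
        ring

end stdGaussian

theorem stmt3_general (p : ℕ) :
    ∃ C : ℝ, 0 < C ∧ ∀ (d : ℕ) (D : Matrix (Fin d) (Fin d) ℝ), D.PosSemidef →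
      ∫ x, |x ⬝ᵥ D.mulVec x| ^ p ∂(Measure.pi fun _ : Fin d => gaussianReal 0 1) ≤
        C * (D.trace ^ p + (Nat.doubleFactorial (2 * p - 1) : ℝ) * (D ^ p).trace) := by
  set m := ∫ t, t ^ (2 * p) ∂gaussianReal 0 1
  have hm : 0 ≤ m := integral_nonneg fun t => (even_two_mul p).pow_nonneg t
  refine ⟨m + 1, by positivity, fun d D hD => ?_⟩
  have hT : (toEuclideanLin D).IsPositive := isPositive_toEuclideanLin_iff.mpr hD
  have hquad : ∀ x : Fin d → ℝ,
      x ⬝ᵥ D *ᵥ x = ⟪toEuclideanLin D (WithLp.toLp 2 x), WithLp.toLp 2 x⟫ := fun x => by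
    simp [EuclideanSpace.inner_eq_star_dotProduct]
  have hint : ∫ x, |x ⬝ᵥ D *ᵥ x| ^ p ∂(Measure.pi fun _ : Fin d => gaussianReal 0 1) =
      ∫ y, ⟪toEuclideanLin D y, y⟫ ^ p ∂stdGaussian (EuclideanSpace ℝ (Fin d)) := by
    rw [← map_pi_eq_stdGaussian, integral_map (by fun_prop) (by fun_prop)]
    simp_rw [hquad, abs_of_nonneg (hT.inner_nonneg_left _)]
  have htr : LinearMap.trace ℝ _ (toEuclideanLin D) = D.trace := by
    rw [toEuclideanLin_eq_toLin_orthonormal, trace_toLin_eq]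
  calc _ ≤ D.trace ^ p * m := by
        rw [hint, ← htr]
        exact integral_inner_apply_self_pow_stdGaussian_le hT p
    _ ≤ (m + 1) * (D.trace ^ p + (Nat.doubleFactorial (2 * p - 1) : ℝ) * (D ^ p).trace) := by
      have := mul_nonneg (Nat.cast_nonneg (2 * p - 1).doubleFactorial) (hD.pow p).trace_nonneg
      nlinarith [pow_nonneg hD.trace_nonneg p]

/-- For a nonnegative-definite symmetric `d×d` real matrix `D` and a standard Gaussian
vector `x` in `ℝ^d`, for every `p ≥ 1` there is a constant `C_p > 0` depending only on `p`
such that `E[|xᵀ D x|^p] ≤ C_p ((Tr D)^p + (2p−1)!! · Tr(D^p))`. -/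
theorem stmt3 (p : ℕ) (hp : 1 ≤ p) :
    ∃ C : ℝ, 0 < C ∧ ∀ (d : ℕ) (D : Matrix (Fin d) (Fin d) ℝ), D.PosSemidef →
      ∫ x, |x ⬝ᵥ D.mulVec x| ^ p ∂(Measure.pi fun _ : Fin d => gaussianReal 0 1) ≤
        C * (D.trace ^ p + (Nat.doubleFactorial (2 * p - 1) : ℝ) * (D ^ p).trace) :=
  stmt3_general p
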